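/- Let (c_{n,m})_{n,m≥0} be complex numbers with |c_{n,m}| ≤ 1 and c_{n,n} = 1, and let (ψ_m) be a sequence of unit vectors in ℓ²(ℕ), ψ_m = (d_n^{(m)})_{n≥0} with ∑_n |d_n^{(m)}|² = 1. Suppose that for every k ≥ 1, |∑_{n=0}^∞ c_{n,n+k} \overline{d_n^{(m)}} d_{n+k}^{(m)}| → 1 as m → ∞. Then for every p ∈ ℕ, ∑_{n=0}^p |d_n^{(m)}|² → 0 as m → ∞; in particular |d_n^{(m)}|² → 0 for each fixed n. -/

import Mathlib

/-!
Write `A_k = ∑ₙ c_{n,n+k} conj(dₙ) d_{n+k}`. Since `|c| ≤ 1`, AM-GM bounds each term by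
`(|dₙ|² + |d_{n+k}|²) / 2`, so `|A_k| ≤ (1 + ∑_{n ≥ k} |dₙ|²) / 2 = 1 - (∑_{n < k} |dₙ|²) / 2`.
Hence `∑_{n < k} |dₙ|² ≤ 2 (1 - |A_k|)`, which tends to `0` when `|A_k| → 1`.
-/

open Filter Topology Complex

section ShiftedCorrelation

variable {𝕜 : Type*} [RCLike 𝕜]

lemma norm_mul_conj_mul_le_of_norm_le_one {c : 𝕜} (hc : ‖c‖ ≤ 1) (a b : 𝕜) :
    ‖c * starRingEnd 𝕜 a * b‖ ≤ (‖a‖ ^ 2 + ‖b‖ ^ 2) / 2 := by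
  have hab : ‖c * starRingEnd 𝕜 a * b‖ ≤ ‖a‖ * ‖b‖ := by
    rw [norm_mul, norm_mul, RCLike.norm_conj]
    gcongr
    simpa using mul_le_mul_of_nonneg_right hc (norm_nonneg a)
  nlinarith [sq_nonneg (‖a‖ - ‖b‖)]

variable {f : ℕ → 𝕜} (hf : Summable fun n => ‖f n‖ ^ 2) {c : ℕ → 𝕜} (hc : ∀ n, ‖c n‖ ≤ 1)
include hf hc

lemma norm_tsum_mul_conj_mul_shift_le (k : ℕ) :
    ‖∑' n, c n * starRingEnd 𝕜 (f n) * f (n + k)‖ ≤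
      ∑' n, ‖f n‖ ^ 2 - (∑ n ∈ Finset.range k, ‖f n‖ ^ 2) / 2 := by
  have hshift : Summable fun n => ‖f (n + k)‖ ^ 2 := (summable_nat_add_iff k).mpr hf
  have hbound := fun n => norm_mul_conj_mul_le_of_norm_le_one (hc n) (f n) (f (n + k))
  have hmajorant : Summable fun n => (‖f n‖ ^ 2 + ‖f (n + k)‖ ^ 2) / 2 :=
    (hf.add hshift).div_const 2
  have hsplit := hf.sum_add_tsum_nat_add k
  calc ‖∑' n, c n * starRingEnd 𝕜 (f n) * f (n + k)‖
      ≤ ∑' n, ‖c n * starRingEnd 𝕜 (f n) * f (n + k)‖ :=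
        norm_tsum_le_tsum_norm (hmajorant.of_nonneg_of_le (fun _ => norm_nonneg _) hbound)
    _ ≤ ∑' n, (‖f n‖ ^ 2 + ‖f (n + k)‖ ^ 2) / 2 :=
        (hmajorant.of_nonneg_of_le (fun _ => norm_nonneg _) hbound).tsum_le_tsum hbound hmajorant
    _ = ∑' n, ‖f n‖ ^ 2 - (∑ n ∈ Finset.range k, ‖f n‖ ^ 2) / 2 := by
        rw [tsum_div_const, hf.tsum_add hshift]
        linarith

lemma sum_range_norm_sq_le_two_mul_sub_norm_tsum (k : ℕ) :
    ∑ n ∈ Finset.range k, ‖f n‖ ^ 2 ≤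
      2 * (∑' n, ‖f n‖ ^ 2 - ‖∑' n, c n * starRingEnd 𝕜 (f n) * f (n + k)‖) := by
  linarith [norm_tsum_mul_conj_mul_shift_le hf hc k]

end ShiftedCorrelation

theorem stmt7 (c : ℕ → ℕ → ℂ) (hc1 : ∀ n m, ‖c n m‖ ≤ 1)
    (d : ℕ → ℕ → ℂ) (hnorm : ∀ m, ∑' n : ℕ, ‖d m n‖ ^ 2 = 1)
    (hlim : ∀ k : ℕ, 1 ≤ k →
      Tendsto (fun m => ‖
        (∑' n : ℕ, c n (n + k) * (starRingEnd ℂ) (d m n) * d m (n + k))‖) atTop (𝓝 1)) :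
    (∀ p : ℕ, Tendsto (fun m => ∑ n ∈ Finset.range (p + 1), ‖d m n‖ ^ 2) atTop (𝓝 0)) ∧
    (∀ n : ℕ, Tendsto (fun m => ‖d m n‖ ^ 2) atTop (𝓝 0)) := by
  have hsum : ∀ m, Summable fun n => ‖d m n‖ ^ 2 := fun m =>
    by_contra fun h => by simpa [tsum_eq_zero_of_not_summable h] using hnorm m
  have head : ∀ p : ℕ, Tendsto (fun m => ∑ n ∈ Finset.range (p + 1), ‖d m n‖ ^ 2) atTop (𝓝 0) := by
    intro p
    have hbound := fun m => sum_range_norm_sq_le_two_mul_sub_norm_tsum (hsum m)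
      (c := fun n => c n (n + (p + 1))) (fun n => hc1 n _) (p + 1)
    simp only [hnorm] at hbound
    have hgap := ((hlim (p + 1) p.succ_pos).const_sub 1).const_mul 2
    rw [sub_self, mul_zero] at hgap
    exact squeeze_zero (fun m => Finset.sum_nonneg fun n _ => sq_nonneg _) hbound hgap
  refine ⟨head, fun n => squeeze_zero (fun m => sq_nonneg _) (fun m => ?_) (head n)⟩
  exact Finset.single_le_sum (fun i _ => sq_nonneg ‖d m i‖) (Finset.self_mem_range_succ n)
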